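/- arXiv:1802.05315 — 2 statements merged into one kernel-verified Lean document; each statement's English description precedes it below -/
import Mathlib

section
/- Any interval I = [a, b] ⊆ [1, T] of natural numbers can be partitioned into a finite sequence of disjoint consecutive dyadic intervals I^{−m}, …, I^0, I^1, …, I^h ∈ 𝓘 such that |I^{−i}|/|I^{−i+1}| ≤ 1/2 for all i ≥ 1 and |I^i|/|I^{i−1}| ≤ 1/2 for all i ≥ 2 (Geometric Covering theorem). -/
/-!
Let `2 ^ K ≤ b + 1 - a < 2 ^ (K + 1)` and let `p` be the largest multiple of `2 ^ K` that is at
most `b + 1`; then `a ≤ p`. Cut `[a, p)` into blocks whose lengths are the powers of two in the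
binary expansion of `p - a`, in increasing order, and `[p, b + 1)` into those of `b + 1 - p`, in
decreasing order. Every block length is at most `2 ^ K` and `2 ^ K ∣ p`, so each block starts at
a multiple of its length, i.e. is dyadic.
-/

/-- Dyadic interval of length `2^n` starting at `i * 2^n`, as a set of naturals. -/
def dyadic (n i : ℕ) : Set ℕ := Set.Icc (i * 2 ^ n) ((i + 1) * 2 ^ n - 1)

theorem List.sum_range_length_getD {α M : Type*} [AddCommMonoid M] (l : List α) (d : α)
    (f : α → M) : ∑ i ∈ Finset.range l.length, f (l.getD i d) = (l.map f).sum := by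
  induction l with
  | nil => simp
  | cons n l ih => simp [Finset.sum_range_succ', ← ih, add_comm]

theorem Monotone.biUnion_range_Ico {β : Type*} [LinearOrder β] {f : ℕ → β} (hf : Monotone f)
    (A : ℕ) : ⋃ j ∈ Finset.range A, Set.Ico (f j) (f (j + 1)) = Set.Ico (f 0) (f A) := by
  induction A with
  | zero => simp
  | succ A ih =>
    rw [Finset.range_add_one, Finset.set_biUnion_insert, ih, Set.union_comm,
      Set.Ico_union_Ico_eq_Ico (hf A.zero_le) (hf A.le_succ)]

theorem exists_split_of_sortedLT_append_sortedGT {α : Type*} [Preorder α] {l₁ l₂ : List α}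
    (h₁ : l₁.SortedLT) (h₂ : l₂.SortedGT) (hne : l₁ ++ l₂ ≠ []) (d : α) :
    ∃ m h : ℕ, m + h + 1 = (l₁ ++ l₂).length ∧
      (∀ j, j + 1 ≤ m → (l₁ ++ l₂).getD j d < (l₁ ++ l₂).getD (j + 1) d) ∧
      (∀ j, m + 1 ≤ j → j + 1 ≤ m + h →
        (l₁ ++ l₂).getD (j + 1) d < (l₁ ++ l₂).getD j d) := by
  have hlen : 0 < (l₁ ++ l₂).length := List.length_pos_iff.mpr hne
  rw [List.length_append] at hlen ⊢
  refine ⟨l₁.length - 1, l₁.length + l₂.length - 1 - (l₁.length - 1), by omega, ?_, ?_⟩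
  · intro j hj
    rw [List.getD_append _ _ _ _ (by omega), List.getD_append _ _ _ _ (by omega),
      List.getD_eq_getElem _ _ (by omega), List.getD_eq_getElem _ _ (by omega)]
    exact h₁.getElem_lt_getElem_of_lt j.lt_succ_self
  · intro j hj hj'
    rw [List.getD_append_right _ _ _ _ (by omega), List.getD_append_right _ _ _ _ (by omega),
      List.getD_eq_getElem _ _ (by omega), List.getD_eq_getElem _ _ (by omega)]
    exact h₂.getElem_gt_getElem_of_lt (by omega)

theorem dyadic_eq_Ico (n i : ℕ) : dyadic n i = Set.Ico (i * 2 ^ n) ((i + 1) * 2 ^ n) := by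
  ext x
  simp only [dyadic, Set.mem_Icc, Set.mem_Ico]
  have := Nat.one_le_two_pow (n := n)
  grind

/-- Laid out consecutively from `s`, the blocks of lengths `2 ^ n`, `n ∈ l`, are dyadic. -/
def DyadicChain : ℕ → List ℕ → Prop
  | _, [] => True
  | s, n :: l => 2 ^ n ∣ s ∧ DyadicChain (s + 2 ^ n) l

namespace DyadicChain

theorem append {l₂ : List ℕ} :
    ∀ {s : ℕ} {l₁ : List ℕ}, DyadicChain s l₁ → DyadicChain (s + (l₁.map (2 ^ ·)).sum) l₂ →
      DyadicChain s (l₁ ++ l₂)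
  | _, [], _, h₂ => by simpa using h₂
  | s, n :: l₁, ⟨hn, h₁⟩, h₂ => ⟨hn, h₁.append (by simpa [add_assoc] using h₂)⟩

theorem of_pairwise_le :
    ∀ {s : ℕ} {l : List ℕ}, l.Pairwise (· ≤ ·) →
      (∀ n ∈ l, 2 ^ n ∣ s + (l.map (2 ^ ·)).sum) → DyadicChain s l
  | _, [], _, _ => trivial
  | s, n :: l, hl, h => by
    rw [List.pairwise_cons] at hl
    have htail : 2 ^ n ∣ (l.map (2 ^ ·)).sum :=
      List.dvd_sum fun _ hx ↦ by
        obtain ⟨m, hm, rfl⟩ := List.mem_map.mp hx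
        exact pow_dvd_pow 2 (hl.1 m hm)
    have hend : ∀ m ∈ n :: l, 2 ^ m ∣ s + 2 ^ n + (l.map (2 ^ ·)).sum := by
      simpa [add_assoc] using h
    refine ⟨?_, of_pairwise_le hl.2 fun m hm ↦ hend m (List.mem_cons_of_mem n hm)⟩
    have := hend n List.mem_cons_self
    rwa [Nat.dvd_add_left htail, Nat.dvd_add_left dvd_rfl] at this

theorem of_pairwise_ge :
    ∀ {s : ℕ} {l : List ℕ}, l.Pairwise (· ≥ ·) → (∀ n ∈ l, 2 ^ n ∣ s) → DyadicChain s l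
  | _, [], _, _ => trivial
  | s, n :: l, hl, h => by
    rw [List.pairwise_cons] at hl
    exact ⟨h n List.mem_cons_self, of_pairwise_ge hl.2 fun m hm ↦
      dvd_add (h m (List.mem_cons_of_mem n hm)) (pow_dvd_pow 2 (hl.1 m hm))⟩

theorem two_pow_dvd :
    ∀ {s : ℕ} {l : List ℕ}, DyadicChain s l → ∀ {j : ℕ}, j < l.length →
      2 ^ l.getD j 0 ∣ s + ∑ i ∈ Finset.range j, 2 ^ l.getD i 0
  | _, [], _, _, hj => absurd hj (Nat.not_lt_zero _)
  | _, _ :: _, ⟨hn, _⟩, 0, _ => by simpa using hn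
  | s, n :: l, ⟨_, hl⟩, j + 1, hj => by
    simpa [Finset.sum_range_succ', add_assoc, add_comm (2 ^ n)] using
      hl.two_pow_dvd (Nat.lt_of_succ_lt_succ hj)

theorem exists_partition {s : ℕ} {l : List ℕ} (hl : DyadicChain s l) :
    ∃ ii : ℕ → ℕ,
      (⋃ j ∈ Finset.range l.length, dyadic (l.getD j 0) (ii j)) =
        Set.Ico s (s + (l.map (2 ^ ·)).sum) ∧
      (∀ j k, j < k → k < l.length →
        Disjoint (dyadic (l.getD j 0) (ii j)) (dyadic (l.getD k 0) (ii k))) ∧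
      (∀ j, j + 1 < l.length →
        ii (j + 1) * 2 ^ l.getD (j + 1) 0 = (ii j + 1) * 2 ^ l.getD j 0) := by
  set e : ℕ → ℕ := fun j ↦ l.getD j 0
  set start : ℕ → ℕ := fun j ↦ s + ∑ i ∈ Finset.range j, 2 ^ e i
  have hmono : Monotone start := fun i j hij ↦
    Nat.add_le_add_left (Finset.sum_le_sum_of_subset (Finset.range_mono hij)) s
  have hstart : ∀ j < l.length, start j / 2 ^ e j * 2 ^ e j = start j :=
    fun j hj ↦ Nat.div_mul_cancel (hl.two_pow_dvd hj)
  have hnext : ∀ j < l.length, (start j / 2 ^ e j + 1) * 2 ^ e j = start (j + 1) := by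
    intro j hj
    rw [add_one_mul, hstart j hj]
    simp only [start, Finset.sum_range_succ, add_assoc]
  have hblock : ∀ j < l.length,
      dyadic (e j) (start j / 2 ^ e j) = Set.Ico (start j) (start (j + 1)) := fun j hj ↦ by
    rw [dyadic_eq_Ico, hstart j hj, hnext j hj]
  refine ⟨fun j ↦ start j / 2 ^ e j, ?_, fun j k hjk hk ↦ ?_, fun j hj ↦ ?_⟩
  · rw [Set.iUnion₂_congr fun j hj ↦ hblock j (Finset.mem_range.mp hj),
      hmono.biUnion_range_Ico, ← List.sum_range_length_getD l 0]
    rfl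
  · rw [hblock j (hjk.trans hk), hblock k hk]
    exact hmono.pairwise_disjoint_on_Ico_succ hjk.ne
  · rw [hstart (j + 1) hj, hnext j (Nat.lt_of_succ_lt hj)]

end DyadicChain

theorem Nat.le_of_mem_bitIndices_of_lt_two_pow {d n K : ℕ} (hd : d < 2 ^ (K + 1))
    (hn : n ∈ d.bitIndices) : n ≤ K :=
  Nat.lt_succ_iff.mp ((Nat.pow_lt_pow_iff_right one_lt_two).mp
    ((Nat.two_pow_le_of_mem_bitIndices hn).trans_lt hd))

theorem dyadicChain_bitIndices {s d K : ℕ} (hd : d < 2 ^ (K + 1)) (hK : 2 ^ K ∣ s + d) :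
    DyadicChain s d.bitIndices :=
  DyadicChain.of_pairwise_le (Nat.bitIndices_sorted.pairwise.imp le_of_lt) fun n hn ↦ by
    rw [Nat.sum_map_two_pow_bitIndices]
    exact (pow_dvd_pow 2 (Nat.le_of_mem_bitIndices_of_lt_two_pow hd hn)).trans hK

theorem dyadicChain_reverse_bitIndices {s d K : ℕ} (hd : d < 2 ^ (K + 1)) (hK : 2 ^ K ∣ s) :
    DyadicChain s d.bitIndices.reverse :=
  DyadicChain.of_pairwise_ge (Nat.bitIndices_sorted.reverse.pairwise.imp le_of_lt) fun _ hn ↦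
    (pow_dvd_pow 2 <| Nat.le_of_mem_bitIndices_of_lt_two_pow hd <| List.mem_reverse.mp hn).trans hK

theorem exists_two_pow_dvd_mem_Icc {a c : ℕ} (hac : a < c) :
    ∃ p K, a ≤ p ∧ p ≤ c ∧ 2 ^ K ∣ p ∧ c - a < 2 ^ (K + 1) := by
  set K := Nat.log 2 (c - a)
  have hK : 2 ^ K ≤ c - a := Nat.pow_log_le_self 2 (by omega)
  have hmod : c % 2 ^ K < 2 ^ K := Nat.mod_lt c (by positivity)
  exact ⟨c - c % 2 ^ K, K, by omega, Nat.sub_le c _, Nat.dvd_sub_mod c,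
    Nat.lt_pow_succ_log_self one_lt_two _⟩

theorem stmt2_general (a b : ℕ) (hab : a ≤ b) :
    ∃ (m h : ℕ) (nn ii : ℕ → ℕ),
      -- the intervals cover exactly [a,b]
      (⋃ j ∈ Finset.range (m + h + 1), dyadic (nn j) (ii j)) = Set.Icc a b ∧
      -- they are pairwise disjoint
      (∀ j k : ℕ, j < k → k ≤ m + h → Disjoint (dyadic (nn j) (ii j)) (dyadic (nn k) (ii k))) ∧
      -- they are consecutive: each interval starts right after the previous one ends
      (∀ j : ℕ, j < m + h → ii (j + 1) * 2 ^ nn (j + 1) = (ii j + 1) * 2 ^ nn j) ∧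
      -- first sequence I^{-m}, …, I^0: lengths at least double, i.e. |I^{-i}| ≤ |I^{-i+1}|/2
      (∀ j : ℕ, j + 1 ≤ m → 2 * 2 ^ nn j ≤ 2 ^ nn (j + 1)) ∧
      -- second sequence I^1, …, I^h: lengths at least halve from the second one on,
      -- i.e. |I^i| ≤ |I^{i-1}|/2 for i ≥ 2
      (∀ j : ℕ, m + 1 ≤ j → j + 1 ≤ m + h → 2 * 2 ^ nn (j + 1) ≤ 2 ^ nn j) := by
  obtain ⟨p, K, hap, hpb, hKp, hK⟩ := exists_two_pow_dvd_mem_Icc (Nat.lt_succ_of_le hab)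
  set l := (p - a).bitIndices ++ (b + 1 - p).bitIndices.reverse
  have hchain : DyadicChain a l :=
    (dyadicChain_bitIndices (K := K) (by omega) (by rwa [Nat.add_sub_cancel' hap])).append (by
      rw [Nat.sum_map_two_pow_bitIndices, Nat.add_sub_cancel' hap]
      exact dyadicChain_reverse_bitIndices (by omega) hKp)
  have hsum : (l.map (2 ^ ·)).sum = b + 1 - a := by
    simp only [l, List.map_append, List.map_reverse, List.sum_append, List.sum_reverse,
      Nat.sum_map_two_pow_bitIndices]
    omega
  have hne : l ≠ [] := fun h ↦ by
    simp only [h, List.map_nil, List.sum_nil] at hsum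
    omega
  obtain ⟨ii, hcover, hdisj, hcons⟩ := hchain.exists_partition
  obtain ⟨m, h, hmh, hup, hdown⟩ := exists_split_of_sortedLT_append_sortedGT
    Nat.bitIndices_sorted Nat.bitIndices_sorted.reverse hne 0
  replace hmh : m + h + 1 = l.length := hmh
  have hpow : ∀ {x y : ℕ}, x < y → 2 * 2 ^ x ≤ 2 ^ y := fun hxy ↦
    (pow_succ' 2 _).symm.trans_le (Nat.pow_le_pow_right two_pos hxy)
  refine ⟨m, h, fun j ↦ l.getD j 0, ii, ?_, fun j k hjk hk ↦ hdisj j k hjk (by omega),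
    fun j hj ↦ hcons j (by omega), fun j hj ↦ hpow (hup j hj),
    fun j hj hj' ↦ hpow (hdown j hj hj')⟩
  rw [hmh, hcover, hsum, Nat.add_sub_cancel' (by omega), Set.Ico_add_one_right_eq_Icc]

/-- Geometric Covering: any interval `[a,b] ⊆ [1,T]` can be partitioned into
a finite sequence of disjoint, consecutive dyadic intervals
`I^{-m}, …, I^0, I^1, …, I^h ∈ 𝓘` (indexed here by `j = 0, …, m + h`, with pivot `m`),
whose lengths at least double along the first sequence and at least halve along the second
(the halving condition starting from the second interval of the second sequence). -/
theorem stmt2 (T a b : ℕ) (ha : 1 ≤ a) (hab : a ≤ b) (hbT : b ≤ T) :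
    ∃ (m h : ℕ) (nn ii : ℕ → ℕ),
      -- the intervals cover exactly [a,b]
      (⋃ j ∈ Finset.range (m + h + 1), dyadic (nn j) (ii j)) = Set.Icc a b ∧
      -- they are pairwise disjoint
      (∀ j k : ℕ, j < k → k ≤ m + h → Disjoint (dyadic (nn j) (ii j)) (dyadic (nn k) (ii k))) ∧
      -- they are consecutive: each interval starts right after the previous one ends
      (∀ j : ℕ, j < m + h → ii (j + 1) * 2 ^ nn (j + 1) = (ii j + 1) * 2 ^ nn j) ∧
      -- first sequence I^{-m}, …, I^0: lengths at least double, i.e. |I^{-i}| ≤ |I^{-i+1}|/2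
      (∀ j : ℕ, j + 1 ≤ m → 2 * 2 ^ nn j ≤ 2 ^ nn (j + 1)) ∧
      -- second sequence I^1, …, I^h: lengths at least halve from the second one on,
      -- i.e. |I^i| ≤ |I^{i-1}|/2 for i ≥ 2
      (∀ j : ℕ, m + 1 ≤ j → j + 1 ≤ m + h → 2 * 2 ^ nn (j + 1) ≤ 2 ^ nn j) :=
  stmt2_general a b hab
end

section
/- Consider a two-expert prediction game of length m where rewards r_t(1), r_t(2) ∈ [0,1] are i.i.d. over t with E[r_t(1)] − E[r_t(2)] = Δ > 0. The Follow-The-Leader algorithm, which at time t plays x_t = argmax_k ∑_{s<t} r_s(k) (breaking ties for expert 1), incurs expected pseudo-regret ∑_{t=1}^m Δ·P(x_t = 2) ≤ Δ + Δ·∑_{t=2}^m e^{−(t−1)Δ²/2} ≤ Δ + 2/Δ, which is O(1/Δ) independent of m. -/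
open MeasureTheory ProbabilityTheory

/-!
Follow-The-Leader picks expert 2 at time `t` only if the `t - 1` i.i.d. reward differences
`r_s(1) - r_s(2) ∈ [-1, 1]`, each of mean `Δ`, have a nonpositive sum. By Hoeffding's inequality
this has probability at most `e^{-(t-1)Δ²/2}`, and the geometric series
`∑_{k ≥ 1} e^{-kΔ²/2} = 1 / (e^{Δ²/2} - 1)` is at most `2 / Δ²`.
-/

theorem measureReal_sum_nonpos_le_of_iIndepFun {Ω ι : Type*} [MeasurableSpace Ω]
    {μ : Measure Ω} [IsProbabilityMeasure μ] {X : ι → Ω → ℝ} (hindep : iIndepFun X μ)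
    (hmeas : ∀ i, AEMeasurable (X i) μ) {a b : ℝ} (hbdd : ∀ i, ∀ᵐ ω ∂μ, X i ω ∈ Set.Icc a b)
    {s : Finset ι} {Δ : ℝ} (hΔ : 0 ≤ Δ) (hmean : ∀ i ∈ s, μ[X i] = Δ) :
    μ.real {ω | ∑ i ∈ s, X i ω ≤ 0} ≤ Real.exp (-2 * s.card * Δ ^ 2 / (b - a) ^ 2) := by
  have hsubG : ∀ i ∈ s, HasSubgaussianMGF (fun ω ↦ Δ - X i ω) ((‖-a - -b‖₊ / 2) ^ 2) μ := by
    intro i hi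
    -- Hoeffding's lemma for `-X i`, whose centred version is `Δ - X i`
    have h := hasSubgaussianMGF_of_mem_Icc (hmeas i).neg
      (by filter_upwards [hbdd i] with ω hω using ⟨neg_le_neg hω.2, neg_le_neg hω.1⟩)
    simp only [Pi.neg_apply, integral_neg, hmean i hi] at h
    convert h using 2
    ring
  have hindep_centered : iIndepFun (fun i ω ↦ Δ - X i ω) μ :=
    hindep.comp (fun _ x ↦ Δ - x) (fun _ ↦ measurable_const.sub measurable_id)
  have hevent : {ω | ∑ i ∈ s, X i ω ≤ 0} = {ω | s.card * Δ ≤ ∑ i ∈ s, (Δ - X i ω)} := by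
    ext ω
    simp [Finset.sum_sub_distrib]
  rw [hevent]
  refine (HasSubgaussianMGF.measure_sum_ge_le_of_iIndepFun hindep_centered hsubG
    (by positivity)).trans_eq ?_
  congr 1
  rcases eq_or_ne s.card 0 with hs | hs
  · simp [hs]
  · simp only [sub_neg_eq_add, Finset.sum_const, nsmul_eq_mul, NNReal.coe_mul,
      NNReal.coe_natCast, NNReal.coe_pow, NNReal.coe_div, coe_nnnorm, Real.norm_eq_abs,
      NNReal.coe_ofNat, neg_mul]
    field_simp
    rw [sq_abs]
    ring

theorem sum_Icc_two_exp_neg_mul_le {c : ℝ} (hc : 0 < c) (m : ℕ) :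
    ∑ t ∈ Finset.Icc 2 m, Real.exp (-((t : ℝ) - 1) * c) ≤ 1 / c := by
  set q := Real.exp (-c) with hq
  have hterm : ∀ t ∈ Finset.Icc 2 m, Real.exp (-((t : ℝ) - 1) * c) = q ^ (t - 1) := by
    intro t ht
    rw [← Real.exp_nat_mul, Nat.cast_sub (by grind)]
    ring_nf
  calc ∑ t ∈ Finset.Icc 2 m, Real.exp (-((t : ℝ) - 1) * c)
      = ∑ j ∈ Finset.Ico 1 m, q ^ j := by
        rw [Finset.sum_congr rfl hterm, ← Finset.Ico_add_one_right_eq_Icc,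
          ← Finset.sum_Ico_add' _ 1 m 1]
        simp
    _ ≤ q ^ 1 / (1 - q) :=
        geom_sum_Ico_le_of_lt_one (Real.exp_pos _).le (Real.exp_lt_one_iff.2 (by linarith))
    _ = 1 / (Real.exp c - 1) := by
        rw [pow_one, hq, Real.exp_neg]
        field_simp
    _ ≤ 1 / c := by
        gcongr
        linarith [Real.add_one_le_exp c]

theorem mul_sum_Icc_two_exp_neg_sq_le {Δ : ℝ} (hΔ : 0 < Δ) (m : ℕ) :
    Δ * ∑ t ∈ Finset.Icc 2 m, Real.exp (-((t : ℝ) - 1) * Δ ^ 2 / 2) ≤ 2 / Δ := by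
  simp only [mul_div_assoc]
  calc Δ * ∑ t ∈ Finset.Icc 2 m, Real.exp (-((t : ℝ) - 1) * (Δ ^ 2 / 2))
      ≤ Δ * (1 / (Δ ^ 2 / 2)) := by gcongr; exact sum_Icc_two_exp_neg_mul_le (by positivity) m
    _ = 2 / Δ := by field_simp

theorem sum_Icc_one_le_add_sum_Icc_two {M : Type*} [AddCommMonoid M] [PartialOrder M]
    [IsOrderedAddMonoid M] {f : ℕ → M} (hf : ∀ t, 0 ≤ f t) (m : ℕ) :
    ∑ t ∈ Finset.Icc 1 m, f t ≤ f 1 + ∑ t ∈ Finset.Icc 2 m, f t := by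
  rw [← Finset.sum_insert (by simp : 1 ∉ Finset.Icc 2 m)]
  exact Finset.sum_le_sum_of_subset_of_nonneg (fun t ht ↦ by grind) fun t _ _ ↦ hf t

/-- in a two-expert game of length `m` with i.i.d. rewards
`r_t(1), r_t(2) ∈ [0,1]` and `E[r_t(1)] − E[r_t(2)] = Δ > 0`, the Follow-The-Leader
algorithm `x_t = argmax_k ∑_{s<t} r_s(k)` (ties to expert 1) has expected pseudo-regret
`∑_{t=1}^m Δ·P(x_t = 2) ≤ Δ + Δ·∑_{t=2}^m e^{−(t−1)Δ²/2} ≤ Δ + 2/Δ`. -/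
theorem stmt9 {Ω : Type*} [MeasurableSpace Ω] (μ : Measure Ω) [IsProbabilityMeasure μ]
    (m : ℕ) (r1 r2 : ℕ → Ω → ℝ) (Δ : ℝ) (x : ℕ → Ω → ℕ)
    (hmeas1 : ∀ t, Measurable (r1 t)) (hmeas2 : ∀ t, Measurable (r2 t))
    (hbdd1 : ∀ t ω, r1 t ω ∈ Set.Icc (0 : ℝ) 1) (hbdd2 : ∀ t ω, r2 t ω ∈ Set.Icc (0 : ℝ) 1)
    (hindep : iIndepFun (fun t ω => (r1 t ω, r2 t ω)) μ)
    (hident : ∀ t, IdentDistrib (fun ω => (r1 t ω, r2 t ω)) (fun ω => (r1 0 ω, r2 0 ω)) μ μ)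
    (hΔ : 0 < Δ) (hgap : μ[r1 0] - μ[r2 0] = Δ)
    -- FTL: play expert 1 iff its cumulative past reward is at least that of expert 2
    (hx : ∀ t ω, x t ω = if 0 ≤ ∑ s ∈ Finset.Ico 1 t, (r1 s ω - r2 s ω) then 1 else 2) :
    ∑ t ∈ Finset.Icc 1 m, Δ * (μ {ω | x t ω = 2}).toReal ≤
        Δ + Δ * ∑ t ∈ Finset.Icc 2 m, Real.exp (-((t : ℝ) - 1) * Δ ^ 2 / 2) ∧
      Δ + Δ * ∑ t ∈ Finset.Icc 2 m, Real.exp (-((t : ℝ) - 1) * Δ ^ 2 / 2) ≤ Δ + 2 / Δ := by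
  set D : ℕ → Ω → ℝ := fun t ω ↦ r1 t ω - r2 t ω
  have hD_meas : Measurable fun p : ℝ × ℝ ↦ p.1 - p.2 := measurable_fst.sub measurable_snd
  have hD_mem : ∀ t ω, D t ω ∈ Set.Icc (-1) 1 := fun t ω ↦ by
    obtain ⟨h1, h1'⟩ := hbdd1 t ω
    obtain ⟨h2, h2'⟩ := hbdd2 t ω
    exact ⟨by linarith, by linarith⟩
  have hD_mean : ∀ t, μ[D t] = Δ := fun t ↦ by
    refine ((hident t).comp hD_meas).integral_eq.trans (hgap ▸ ?_)
    exact integral_sub (.of_mem_Icc 0 1 (hmeas1 0).aemeasurable (.of_forall (hbdd1 0)))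
      (.of_mem_Icc 0 1 (hmeas2 0).aemeasurable (.of_forall (hbdd2 0)))
  have hprob : ∀ t, 1 ≤ t →
      μ.real {ω | x t ω = 2} ≤ Real.exp (-((t : ℝ) - 1) * Δ ^ 2 / 2) := fun t ht ↦ by
    have hsub : {ω | x t ω = 2} ⊆ {ω | ∑ s ∈ Finset.Ico 1 t, D s ω ≤ 0} := fun ω hω ↦ by
      simp only [Set.mem_ofPred_eq, hx] at hω ⊢
      split_ifs at hω with h
      · simp at hω
      · exact (not_le.mp h).le
    refine (measureReal_mono hsub).trans ((measureReal_sum_nonpos_le_of_iIndepFun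
      (hindep.comp (fun _ ↦ _) (fun _ ↦ hD_meas)) (fun t ↦ ((hmeas1 t).sub (hmeas2 t)).aemeasurable)
      (fun t ↦ .of_forall (hD_mem t)) hΔ.le fun s _ ↦ hD_mean s).trans_eq ?_)
    rw [Nat.card_Ico, Nat.cast_sub ht]
    ring_nf
  constructor
  · calc ∑ t ∈ Finset.Icc 1 m, Δ * μ.real {ω | x t ω = 2}
        ≤ Δ * μ.real {ω | x 1 ω = 2} + ∑ t ∈ Finset.Icc 2 m, Δ * μ.real {ω | x t ω = 2} :=
          sum_Icc_one_le_add_sum_Icc_two (fun _ ↦ by positivity) m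
      _ ≤ Δ * 1 + ∑ t ∈ Finset.Icc 2 m, Δ * Real.exp (-((t : ℝ) - 1) * Δ ^ 2 / 2) := by
          gcongr with t ht
          · exact measureReal_le_one
          · exact hprob t (by grind)
      _ = Δ + Δ * ∑ t ∈ Finset.Icc 2 m, Real.exp (-((t : ℝ) - 1) * Δ ^ 2 / 2) := by
          rw [mul_one, Finset.mul_sum]
  · exact add_le_add_right (mul_sum_Icc_two_exp_neg_sq_le hΔ m) Δ
end
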